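/- Let N ≥ 1, σ² > 0, and let G be an N×N real matrix with G + Gᵀ ≠ (2/N)·tr(G)·I_N. Then the symmetric 2×2 real matrix [[ tr(G²) + tr(GᵀG), σ^{-2}·tr(G) ], [ σ^{-2}·tr(G), N/(2σ⁴) ]] is positive definite. -/

import Mathlib

/-!
Write `a = tr(G²) + tr(GᵀG)` and `t = tr G`. The symmetric part `S = G + Gᵀ` has `tr S = 2t` and
`tr S² = 2a`, and the traceless matrix `S - (tr S / N) I` is nonzero by hypothesis, so its squared
Frobenius norm `tr S² - (tr S)² / N` is positive: `2t² < N a`. This is exactly positivity of the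
determinant of the block, whose upper left entry `a` is then positive as well.
-/

open Matrix

namespace Matrix

variable {n : Type*} [Fintype n]

theorem trace_mul_self_pos_of_isSymm {A : Matrix n n ℝ} (hA : A.IsSymm) (h : A ≠ 0) :
    0 < (A * A).trace := by
  have hAA : Aᴴ * A = A * A := by rw [conjTranspose_eq_transpose_of_trivial, hA.eq]
  refine lt_of_le_of_ne ?_ (Ne.symm ?_)
  · simpa only [hAA] using (posSemidef_conjTranspose_mul_self A).trace_nonneg
  · rwa [← hAA, Ne, trace_conjTranspose_mul_self_eq_zero_iff]

theorem trace_sub_smul_one_mul_self [DecidableEq n] {R : Type*} [CommRing R]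
    (S : Matrix n n R) (c : R) :
    ((S - c • 1) * (S - c • 1)).trace = (S * S).trace - 2 * c * S.trace + Fintype.card n * c ^ 2 := by
  simp only [Matrix.sub_mul, Matrix.mul_sub, Matrix.smul_mul, Matrix.mul_smul, Matrix.one_mul,
    Matrix.mul_one, trace_sub, trace_smul, trace_one, smul_eq_mul]
  ring

theorem sq_trace_lt_card_mul_trace_mul_self [DecidableEq n] {S : Matrix n n ℝ} (hS : S.IsSymm)
    (h : S ≠ (S.trace / Fintype.card n) • 1) :
    S.trace ^ 2 < Fintype.card n * (S * S).trace := by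
  rcases isEmpty_or_nonempty n with hn | hn
  · exact absurd (Subsingleton.elim _ _) h
  have hcard : (0 : ℝ) < Fintype.card n := Nat.cast_pos.mpr Fintype.card_pos
  have hA : (S - (S.trace / Fintype.card n) • 1).IsSymm :=
    hS.sub (isSymm_one.smul _)
  have hpos := trace_mul_self_pos_of_isSymm hA (sub_ne_zero.mpr h)
  rw [trace_sub_smul_one_mul_self] at hpos
  field_simp at hpos
  linarith

theorem trace_add_transpose_mul_self {R : Type*} [CommRing R] (G : Matrix n n R) :
    ((G + Gᵀ) * (G + Gᵀ)).trace = 2 * ((G * G).trace + (Gᵀ * G).trace) := by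
  have hT : (Gᵀ * Gᵀ).trace = (G * G).trace := by rw [← transpose_mul, trace_transpose]
  simp only [add_mul, mul_add, trace_add, hT, trace_mul_comm G Gᵀ]
  ring

theorem posDef_fin_two {a b d : ℝ} (ha : 0 < a) (hdet : 0 < a * d - b ^ 2) :
    PosDef !![a, b; b, d] := by
  refine .of_dotProduct_mulVec_pos ?_ fun x hx ↦ ?_
  · ext i j
    fin_cases i <;> fin_cases j <;> rfl
  have hx' : x 0 ≠ 0 ∨ x 1 ≠ 0 := by
    by_contra! h0
    exact hx (by ext i; fin_cases i <;> simp [h0.1, h0.2])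
  simp only [star_trivial, dotProduct, mulVec, Fin.sum_univ_two, of_apply, cons_val_zero,
    cons_val_one, cons_val', empty_val', cons_val_fin_one]
  -- `a Q(x) = (a x₀ + b x₁)² + (a d - b²) x₁²`
  have hsq : 0 < (a * x 0 + b * x 1) ^ 2 + (a * d - b ^ 2) * x 1 ^ 2 := by
    by_cases h1 : x 1 = 0
    · have h0 : x 0 ≠ 0 := hx'.resolve_right (not_not.mpr h1)
      have : a * x 0 ≠ 0 := mul_ne_zero ha.ne' h0
      simp only [h1, mul_zero, add_zero, ne_eq, OfNat.ofNat_ne_zero, not_false_eq_true,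
        zero_pow]
      positivity
    · have := mul_pos hdet (pow_two_pos_of_ne_zero h1)
      positivity
  nlinarith

end Matrix

theorem information_block_posDef_general (N : ℕ) (σ2 : ℝ) (hσ : 0 < σ2)
    (G : Matrix (Fin N) (Fin N) ℝ)
    (hG : G + Gᵀ ≠ ((2 / N : ℝ) * G.trace) • (1 : Matrix (Fin N) (Fin N) ℝ)) :
    Matrix.PosDef
      !![(G * G).trace + (Gᵀ * G).trace, σ2⁻¹ * G.trace;
         σ2⁻¹ * G.trace, (N : ℝ) / (2 * σ2 ^ 2)] := by
  set a := (G * G).trace + (Gᵀ * G).trace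
  set t := G.trace
  have htrS : (G + Gᵀ).trace = 2 * t := by rw [trace_add, trace_transpose]; ring
  have hcs := sq_trace_lt_card_mul_trace_mul_self (isSymm_add_transpose_self G) (by
    rwa [htrS, Fintype.card_fin, mul_div_right_comm])
  rw [htrS, trace_add_transpose_mul_self, Fintype.card_fin] at hcs
  have hN : (0 : ℝ) < N :=
    Nat.cast_pos.mpr (Nat.pos_of_ne_zero (by rintro rfl; exact hG (Subsingleton.elim _ _)))
  refine posDef_fin_two (by nlinarith) ?_
  have hdet : a * (N / (2 * σ2 ^ 2)) - (σ2⁻¹ * t) ^ 2 = (N * a - 2 * t ^ 2) / (2 * σ2 ^ 2) := by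
    field_simp
  rw [hdet]
  exact div_pos (by linarith) (by positivity)

/-- If `G + Gᵀ ≠ (2/N) tr(G) I`, then the `2 × 2` information block
`[[tr(G²) + tr(GᵀG), σ⁻² tr G], [σ⁻² tr G, N/(2σ⁴)]]` is positive definite
(here `σ2` denotes `σ²`). -/
theorem information_block_posDef (N : ℕ) (hN : 1 ≤ N) (σ2 : ℝ) (hσ : 0 < σ2)
    (G : Matrix (Fin N) (Fin N) ℝ)
    (hG : G + Gᵀ ≠ ((2 / N : ℝ) * G.trace) • (1 : Matrix (Fin N) (Fin N) ℝ)) :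
    Matrix.PosDef
      !![(G * G).trace + (Gᵀ * G).trace, σ2⁻¹ * G.trace;
         σ2⁻¹ * G.trace, (N : ℝ) / (2 * σ2 ^ 2)] :=
  information_block_posDef_general N σ2 hσ G hG
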